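/- arXiv:2309.02626 — 2 statements merged into one kernel-verified Lean document; each statement's English description precedes it below -/
import Mathlib

section
/- (Auxiliary recursion lemma) Suppose non-negative scalar sequences $\{a_t\}_{t\ge 0}$ and $\{e_t\}_{t\ge 0}$ satisfy, for a fixed $\bar{\tau} \in \mathbb{N}$: $a_t \le \rho' a_{t-\bar{\tau}} + \frac{b}{\bar{\tau}}\sum_{i=t-\bar{\tau}}^{t-1} a_i + c\sum_{i=t-\bar{\tau}}^{t-1} e_i + r$ for $t \ge \bar{\tau}$, and $a_t \le \rho'' a_0 + \frac{b}{\bar{\tau}}\sum_{i=0}^{t-1} a_i + c\sum_{i=0}^{t-1} e_i + r$ for $t < \bar{\tau}$, where $b, c, r, \rho''$ are non-negative constants with $b \le \rho'/4$ and $\rho' \in (0, 1/4)$. Then for all $t \in \mathbb{N}$, $a_t \le 20\rho''(1 - \frac{3\rho}{4\bar{\tau}})^t a_0 + 60c\sum_{i=0}^{t-1}(1-\frac{3\rho}{4\bar{\tau}})^{t-i} e_i + \frac{26r}{\rho}$, where $\rho := 1 - 2\rho'$. -/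
/-!
Strong induction on `t` with a bound `A qᵗ + B Sₜ + G`, where `Sₜ = ∑_{i<t} q^(t-i) eᵢ` and
`q = 1 - 3ρ/(4τ)`. Going back at most `τ` steps costs at most the factor `q^(-τ) ≤ K := 4/(1 + 6ρ')`
(Bernoulli: `q^τ ≥ 1 - 3ρ/4`), so every term of the window `[t - τ, t)` is at most
`K (A qᵗ + B Sₜ) + G`. The recursion multiplies this by `ρ' + b ≤ 5ρ'/4`, and `K (ρ' + b) ≤ 1`
absorbs the loss; the constants `20`, `60`, `26/ρ` are chosen so that the remaining slack covers the
fresh terms `c ∑ eᵢ + r` and, for `t < τ`, the term `ρ'' a₀`.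
-/

open Finset

noncomputable def discountedSum (q : ℝ) (e : ℕ → ℝ) (t : ℕ) : ℝ :=
  ∑ i ∈ range t, q ^ (t - i) * e i

lemma discountedSum_nonneg {q : ℝ} {e : ℕ → ℝ} (hq : 0 ≤ q) (he : ∀ i, 0 ≤ e i) (t : ℕ) :
    0 ≤ discountedSum q e t :=
  sum_nonneg fun i _ ↦ mul_nonneg (pow_nonneg hq _) (he i)

section Window

variable {q K : ℝ} {τ : ℕ}

lemma nonneg_of_one_le_mul_pow (hq : 0 ≤ q) (hK : 1 ≤ K * q ^ τ) : 0 ≤ K :=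
  (pos_of_mul_pos_left (one_pos.trans_le hK) (pow_nonneg hq τ)).le

lemma pow_le_mul_pow_of_le_add (hq0 : 0 ≤ q) (hq1 : q ≤ 1) (hK : 1 ≤ K * q ^ τ) {i t : ℕ}
    (hti : t ≤ i + τ) : q ^ i ≤ K * q ^ t :=
  calc q ^ i ≤ q ^ i * (K * q ^ τ) := le_mul_of_one_le_right (pow_nonneg hq0 i) hK
    _ = K * q ^ (i + τ) := by ring
    _ ≤ K * q ^ t :=
      mul_le_mul_of_nonneg_left (pow_le_pow_of_le_one hq0 hq1 hti) (nonneg_of_one_le_mul_pow hq0 hK)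

lemma discountedSum_le_mul (hq0 : 0 ≤ q) (hq1 : q ≤ 1) (hK : 1 ≤ K * q ^ τ) {e : ℕ → ℝ}
    (he : ∀ i, 0 ≤ e i) {i t : ℕ} (hit : i ≤ t) (hti : t ≤ i + τ) :
    discountedSum q e i ≤ K * discountedSum q e t := by
  have hK0 := nonneg_of_one_le_mul_pow hq0 hK
  unfold discountedSum
  rw [mul_sum]
  calc ∑ j ∈ range i, q ^ (i - j) * e j
      ≤ ∑ j ∈ range i, K * (q ^ (t - j) * e j) := by
        refine sum_le_sum fun j hj ↦ ?_
        have hj := mem_range.1 hj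
        rw [← mul_assoc]
        exact mul_le_mul_of_nonneg_right
          (pow_le_mul_pow_of_le_add hq0 hq1 hK (by omega)) (he j)
    _ ≤ ∑ j ∈ range t, K * (q ^ (t - j) * e j) :=
        sum_le_sum_of_subset_of_nonneg (range_subset_range.2 hit)
          fun j _ _ ↦ mul_nonneg hK0 (mul_nonneg (pow_nonneg hq0 _) (he j))

lemma sum_Ico_le_mul_discountedSum (hq0 : 0 ≤ q) (hq1 : q ≤ 1) (hK : 1 ≤ K * q ^ τ)
    {e : ℕ → ℝ} (he : ∀ i, 0 ≤ e i) (t : ℕ) :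
    ∑ i ∈ Ico (t - τ) t, e i ≤ K * discountedSum q e t := by
  have hK0 := nonneg_of_one_le_mul_pow hq0 hK
  unfold discountedSum
  rw [mul_sum]
  calc ∑ i ∈ Ico (t - τ) t, e i
      ≤ ∑ i ∈ Ico (t - τ) t, K * (q ^ (t - i) * e i) := by
        refine sum_le_sum fun i hi ↦ ?_
        have hi := mem_Ico.1 hi
        have h := pow_le_mul_pow_of_le_add hq0 hq1 hK (i := 0) (t := t - i) (by omega)
        simpa [mul_assoc] using mul_le_mul_of_nonneg_right h (he i)
    _ ≤ ∑ i ∈ range t, K * (q ^ (t - i) * e i) :=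
        sum_le_sum_of_subset_of_nonneg (fun i hi ↦ mem_range.2 (mem_Ico.1 hi).2)
          fun i _ _ ↦ mul_nonneg hK0 (mul_nonneg (pow_nonneg hq0 _) (he i))

end Window

lemma div_mul_sum_Ico_sub_le {a : ℕ → ℝ} {b C : ℝ} {τ t : ℕ} (hτ : 1 ≤ τ) (hb : 0 ≤ b)
    (hC : 0 ≤ C) (h : ∀ i ∈ Ico (t - τ) t, a i ≤ C) :
    b / τ * ∑ i ∈ Ico (t - τ) t, a i ≤ b * C := by
  have hτ0 : (0 : ℝ) < τ := by exact_mod_cast hτ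
  have hsum : ∑ i ∈ Ico (t - τ) t, a i ≤ τ * C :=
    calc ∑ i ∈ Ico (t - τ) t, a i ≤ #(Ico (t - τ) t) • C := sum_le_card_nsmul _ _ _ h
      _ ≤ τ * C := by
        rw [nsmul_eq_mul, Nat.card_Ico]
        gcongr
        exact_mod_cast (by omega : t - (t - τ) ≤ τ)
  calc b / τ * ∑ i ∈ Ico (t - τ) t, a i ≤ b / τ * (τ * C) := by gcongr
    _ = b * C := by field_simp

section Recursion

variable {a e : ℕ → ℝ} {τ : ℕ} {q K A B G : ℝ}

lemma le_of_mem_window (hq0 : 0 ≤ q) (hq1 : q ≤ 1) (hK : 1 ≤ K * q ^ τ) (he : ∀ i, 0 ≤ e i)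
    (hA : 0 ≤ A) (hB : 0 ≤ B) {t : ℕ}
    (ih : ∀ i < t, a i ≤ A * q ^ i + B * discountedSum q e i + G) :
    ∀ i ∈ Ico (t - τ) t, a i ≤ K * (A * q ^ t + B * discountedSum q e t) + G := by
  intro i hi
  have hi := mem_Ico.1 hi
  have hq := pow_le_mul_pow_of_le_add hq0 hq1 hK (i := i) (t := t) (by omega)
  have hS := discountedSum_le_mul hq0 hq1 hK he (i := i) (t := t) (by omega) (by omega)
  calc a i ≤ A * q ^ i + B * discountedSum q e i + G := ih i hi.2
    _ ≤ A * (K * q ^ t) + B * (K * discountedSum q e t) + G := by gcongr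
    _ = K * (A * q ^ t + B * discountedSum q e t) + G := by ring

theorem le_of_windowed_recursion (he : ∀ i, 0 ≤ e i) (hτ : 1 ≤ τ) {ρ' b c r d : ℝ}
    (hρ' : 0 ≤ ρ') (hb : 0 ≤ b) (hc : 0 ≤ c) (hd : 0 ≤ d)
    (hq0 : 0 ≤ q) (hq1 : q ≤ 1) (hK : 1 ≤ K * q ^ τ) (hA : 0 ≤ A) (hB : 0 ≤ B) (hG : 0 ≤ G)
    (hKρ : K * (ρ' + b) ≤ 1) (hKd : K * (d + b * A) ≤ A) (hKB : K * (B * (ρ' + b) + c) ≤ B)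
    (hrG : (ρ' + b) * G + r ≤ G)
    (h1 : ∀ t, τ ≤ t →
      a t ≤ ρ' * a (t - τ) + (b / τ) * ∑ i ∈ Ico (t - τ) t, a i +
        c * ∑ i ∈ Ico (t - τ) t, e i + r)
    (h2 : ∀ t, t < τ →
      a t ≤ d + (b / τ) * ∑ i ∈ range t, a i + c * ∑ i ∈ range t, e i + r) (t : ℕ) :
    a t ≤ A * q ^ t + B * discountedSum q e t + G := by
  induction t using Nat.strong_induction_on with
  | _ t ih =>
  set S := discountedSum q e t
  set C := K * (A * q ^ t + B * S) + G
  have hK0 := nonneg_of_one_le_mul_pow hq0 hK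
  have hS : 0 ≤ S := discountedSum_nonneg hq0 he t
  have hqt : 0 ≤ q ^ t := pow_nonneg hq0 t
  have hwin := le_of_mem_window hq0 hq1 hK he hA hB ih
  have hC : 0 ≤ C := by positivity
  have havg := div_mul_sum_Ico_sub_le hτ hb hC hwin
  have hsum_e : c * ∑ i ∈ Ico (t - τ) t, e i ≤ c * (K * S) :=
    mul_le_mul_of_nonneg_left (sum_Ico_le_mul_discountedSum hq0 hq1 hK he t) hc
  rcases le_or_gt τ t with htτ | htτ
  · have hlag : a (t - τ) ≤ C := hwin _ (mem_Ico.2 ⟨le_rfl, by omega⟩)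
    have hstep : a t ≤ (ρ' + b) * C + c * (K * S) + r := by
      linarith [h1 t htτ, mul_le_mul_of_nonneg_left hlag hρ']
    linarith [mul_le_mul_of_nonneg_right hKρ (mul_nonneg hA hqt),
      mul_le_mul_of_nonneg_right hKB hS]
  · have hIco : Ico (t - τ) t = range t := by rw [Nat.sub_eq_zero_of_le htτ.le, range_eq_Ico]
    rw [hIco] at havg hsum_e
    have hstep : a t ≤ d + b * C + c * (K * S) + r := by linarith [h2 t htτ]
    have hKq : 1 ≤ K * q ^ t := by
      simpa using pow_le_mul_pow_of_le_add hq0 hq1 hK (i := 0) (t := t) (by omega)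
    linarith [mul_le_mul_of_nonneg_right hKd hqt, mul_le_mul_of_nonneg_right hKB hS,
      mul_le_mul_of_nonneg_left hKq hd, mul_nonneg (mul_nonneg hρ' hK0) (mul_nonneg hB hS),
      mul_nonneg hρ' hG]

end Recursion

lemma one_sub_le_one_sub_div_pow {x : ℝ} (hx0 : 0 ≤ x) (hx2 : x ≤ 2) (n : ℕ) :
    1 - x ≤ (1 - x / n) ^ n := by
  rcases Nat.eq_zero_or_pos n with rfl | hn
  · simpa using hx0
  · have hn' : (1 : ℝ) ≤ n := by exact_mod_cast hn
    have hxn : x / n ≤ 2 := (div_le_self hx0 hn').trans hx2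
    calc 1 - x = 1 + n * -(x / n) := by field_simp; ring
      _ ≤ (1 - x / n) ^ n := by
        simpa [sub_eq_add_neg] using one_add_mul_le_pow (by linarith : -2 ≤ -(x / n)) n

theorem recursion_lemma
    (a e : ℕ → ℝ) (ha : ∀ t, 0 ≤ a t) (he : ∀ t, 0 ≤ e t)
    (τ : ℕ) (hτ : 1 ≤ τ)
    (ρ' b c r ρ'' : ℝ)
    (hb : 0 ≤ b) (hc : 0 ≤ c) (hr : 0 ≤ r) (hρ'' : 0 ≤ ρ'')
    (hbρ : b ≤ ρ' / 4) (hρ'0 : 0 < ρ') (hρ'14 : ρ' < 1 / 4)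
    (h1 : ∀ t, τ ≤ t →
      a t ≤ ρ' * a (t - τ) + (b / τ) * ∑ i ∈ Finset.Ico (t - τ) t, a i +
        c * ∑ i ∈ Finset.Ico (t - τ) t, e i + r)
    (h2 : ∀ t, t < τ →
      a t ≤ ρ'' * a 0 + (b / τ) * ∑ i ∈ Finset.range t, a i +
        c * ∑ i ∈ Finset.range t, e i + r) :
    ∀ t : ℕ,
      a t ≤ 20 * ρ'' * (1 - 3 * (1 - 2 * ρ') / (4 * τ)) ^ t * a 0 +
        60 * c * ∑ i ∈ Finset.range t, (1 - 3 * (1 - 2 * ρ') / (4 * τ)) ^ (t - i) * e i +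
        26 * r / (1 - 2 * ρ') := by
  intro t
  set q := 1 - 3 * (1 - 2 * ρ') / (4 * τ) with hq
  have hρ : 0 < 1 - 2 * ρ' := by linarith
  have h16 : 0 < 1 + 6 * ρ' := by linarith
  have hτ' : (1 : ℝ) ≤ τ := by exact_mod_cast hτ
  have hq0 : 0 ≤ q := sub_nonneg.2 ((div_le_one (by positivity)).2 (by linarith))
  have hq1 : q ≤ 1 := sub_le_self _ (by positivity)
  have hqτ : (1 + 6 * ρ') / 4 ≤ q ^ τ := by
    have := one_sub_le_one_sub_div_pow (x := 3 * (1 - 2 * ρ') / 4) (by linarith) (by linarith) τ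
    rw [hq, ← div_div]
    linarith
  have hK : 1 ≤ 4 / (1 + 6 * ρ') * q ^ τ := by
    rw [div_mul_eq_mul_div, le_div_iff₀ h16]; linarith
  have hKρ : 4 / (1 + 6 * ρ') * (ρ' + b) ≤ 1 := by
    rw [div_mul_eq_mul_div, div_le_iff₀ h16]; linarith
  have hd : 0 ≤ ρ'' * a 0 := mul_nonneg hρ'' (ha 0)
  have hKd : 4 / (1 + 6 * ρ') * (ρ'' * a 0 + b * (20 * ρ'' * a 0)) ≤ 20 * ρ'' * a 0 := by
    rw [div_mul_eq_mul_div, div_le_iff₀ h16]; nlinarith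
  have hKB : 4 / (1 + 6 * ρ') * (60 * c * (ρ' + b) + c) ≤ 60 * c := by
    rw [div_mul_eq_mul_div, div_le_iff₀ h16]; nlinarith
  have hrG : (ρ' + b) * (26 * r / (1 - 2 * ρ')) + r ≤ 26 * r / (1 - 2 * ρ') := by
    rw [mul_div_assoc', div_add' _ _ _ hρ.ne', div_le_div_iff_of_pos_right hρ]
    nlinarith
  calc a t ≤ 20 * ρ'' * a 0 * q ^ t + 60 * c * discountedSum q e t + 26 * r / (1 - 2 * ρ') :=
        le_of_windowed_recursion he hτ hρ'0.le hb hc hd hq0 hq1 hK (by linarith) (by linarith)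
          (div_nonneg (by linarith) hρ.le) hKρ hKd hKB hrG h1 h2 t
    _ = _ := by unfold discountedSum; ring
end

section
/- For any $\mu$-strongly convex, $L$-smooth differentiable function $f_i: \mathbb{R}^d \to \mathbb{R}$ and any points $x, \bar{x}, x^* \in \mathbb{R}^d$: $\langle \nabla f_i(x), \bar{x} - x^* \rangle \ge f_i(\bar{x}) - f_i(x^*) - \frac{L+\mu}{2}\|\bar{x} - x\|^2 + \frac{\mu}{4}\|\bar{x} - x^*\|^2$. -/
open InnerProductSpace

section Aux

variable {d : ℕ}

lemma line_hasDerivAt (f : EuclideanSpace ℝ (Fin d) → ℝ)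
    (g : EuclideanSpace ℝ (Fin d) → EuclideanSpace ℝ (Fin d))
    (hg : ∀ x, HasGradientAt f (g x) x) (a v : EuclideanSpace ℝ (Fin d)) (t : ℝ) :
    HasDerivAt (fun t : ℝ => f (a + t • v)) (inner ℝ (g (a + t • v)) v : ℝ) t := by
  have hline : HasDerivAt (fun t : ℝ => a + t • v) v t := by
    simpa using ((hasDerivAt_id t).smul_const v).const_add a
  have h := ((hg (a + t • v)).hasFDerivAt).comp_hasDerivAt t hline
  exact h.congr_deriv (by simp [InnerProductSpace.toDual_apply_apply])

lemma descent_lemma (L : ℝ) (hL : 0 < L)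
    (f : EuclideanSpace ℝ (Fin d) → ℝ)
    (g : EuclideanSpace ℝ (Fin d) → EuclideanSpace ℝ (Fin d))
    (hg : ∀ x, HasGradientAt f (g x) x)
    (hLip : LipschitzWith (Real.toNNReal L) g)
    (a v : EuclideanSpace ℝ (Fin d)) :
    f (a + v) ≤ f a + (inner ℝ (g a) v : ℝ) + L / 2 * ‖v‖ ^ 2 := by
  set H : ℝ → ℝ := fun t => f (a + t • v) - t * (inner ℝ (g a) v : ℝ) - L / 2 * t ^ 2 * ‖v‖ ^ 2
    with hH
  have hderiv : ∀ t : ℝ, HasDerivAt H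
      ((inner ℝ (g (a + t • v)) v : ℝ) - (inner ℝ (g a) v : ℝ) - L * t * ‖v‖ ^ 2) t := by
    intro t
    have h1 := line_hasDerivAt f g hg a v t
    have h2 : HasDerivAt (fun t : ℝ => t * (inner ℝ (g a) v : ℝ)) (inner ℝ (g a) v : ℝ) t :=
      hasDerivAt_mul_const _
    have h3 : HasDerivAt (fun t : ℝ => L / 2 * t ^ 2 * ‖v‖ ^ 2) (L * t * ‖v‖ ^ 2) t := by
      have := ((hasDerivAt_pow 2 t).const_mul (L / 2)).mul_const (‖v‖ ^ 2)
      exact this.congr_deriv (by push_cast; ring)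
    have := (h1.sub h2).sub h3
    exact this
  have hmono : AntitoneOn H (Set.Icc (0 : ℝ) 1) := by
    apply antitoneOn_of_deriv_nonpos (convex_Icc 0 1)
    · exact fun t _ => ((hderiv t).continuousAt).continuousWithinAt
    · exact fun t _ => ((hderiv t).differentiableAt).differentiableWithinAt
    · intro t ht
      rw [interior_Icc] at ht
      rw [(hderiv t).deriv]
      have key : (inner ℝ (g (a + t • v)) v : ℝ) - (inner ℝ (g a) v : ℝ)
          = (inner ℝ (g (a + t • v) - g a) v : ℝ) := by rw [inner_sub_left]
      have hcs : (inner ℝ (g (a + t • v) - g a) v : ℝ) ≤ ‖g (a + t • v) - g a‖ * ‖v‖ :=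
        real_inner_le_norm _ _
      have hlip : ‖g (a + t • v) - g a‖ ≤ L * (t * ‖v‖) := by
        have := hLip.dist_le_mul (a + t • v) a
        rw [dist_eq_norm, dist_eq_norm] at this
        have h2 : a + t • v - a = t • v := by abel
        rw [h2, Real.coe_toNNReal L hL.le, norm_smul, Real.norm_eq_abs,
          abs_of_pos ht.1] at this
        linarith [this]
      nlinarith [norm_nonneg v, hcs, hlip]
  have h01 := hmono (Set.mem_Icc.mpr ⟨le_refl 0, zero_le_one⟩)
    (Set.mem_Icc.mpr ⟨zero_le_one, le_refl 1⟩) zero_le_one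
  simp only [hH, one_smul, zero_smul, add_zero, one_pow, one_mul, zero_pow, mul_zero,
    zero_mul, sub_zero] at h01
  linarith [h01]

lemma strong_convex_lower (μ : ℝ)
    (f : EuclideanSpace ℝ (Fin d) → ℝ)
    (g : EuclideanSpace ℝ (Fin d) → EuclideanSpace ℝ (Fin d))
    (hg : ∀ x, HasGradientAt f (g x) x)
    (hsc : StrongConvexOn Set.univ μ f)
    (a v : EuclideanSpace ℝ (Fin d)) :
    f a + (inner ℝ (g a) v : ℝ) + μ / 2 * ‖v‖ ^ 2 ≤ f (a + v) := by
  have hc : ConvexOn ℝ Set.univ (fun y => f y - μ / 2 * ‖y‖ ^ 2) :=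
    strongConvexOn_iff_convex.mp hsc
  have hnorm : ∀ t : ℝ, ‖a + t • v‖ ^ 2 = ‖a‖ ^ 2 + 2 * t * (inner ℝ a v : ℝ) + t ^ 2 * ‖v‖ ^ 2 := by
    intro t
    rw [norm_add_sq_real, real_inner_smul_right, norm_smul, Real.norm_eq_abs, mul_pow, sq_abs]
    ring
  set φ : ℝ → ℝ := fun t => f (a + t • v) - μ / 2 * ‖a + t • v‖ ^ 2 with hφ
  have hφc : ConvexOn ℝ Set.univ φ := by
    have hmap : ConvexOn ℝ ((AffineMap.lineMap a (a + v) : ℝ →ᵃ[ℝ] _) ⁻¹' Set.univ)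
        ((fun y => f y - μ / 2 * ‖y‖ ^ 2) ∘ (AffineMap.lineMap a (a + v) : ℝ →ᵃ[ℝ] _)) :=
      hc.comp_affineMap _
    have : ((fun y => f y - μ / 2 * ‖y‖ ^ 2) ∘ (AffineMap.lineMap a (a + v) : ℝ →ᵃ[ℝ] _)) = φ := by
      funext t
      simp only [Function.comp_apply, AffineMap.lineMap_apply, hφ, vadd_eq_add]
      rw [vsub_eq_sub, add_sub_cancel_left, add_comm]
    rwa [Set.preimage_univ, this] at hmap
  have hd : HasDerivAt φ ((inner ℝ (g a) v : ℝ) - μ * (inner ℝ a v : ℝ)) 0 := by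
    have h1 := line_hasDerivAt f g hg a v 0
    have h2 : HasDerivAt (fun t : ℝ => μ / 2 * ‖a + t • v‖ ^ 2)
        (μ * (inner ℝ a v : ℝ)) 0 := by
      have heq : (fun t : ℝ => μ / 2 * ‖a + t • v‖ ^ 2)
          = fun t : ℝ => μ / 2 * (‖a‖ ^ 2 + 2 * t * (inner ℝ a v : ℝ) + t ^ 2 * ‖v‖ ^ 2) := by
        funext t; rw [hnorm t]
      rw [heq]
      have : HasDerivAt (fun t : ℝ => ‖a‖ ^ 2 + 2 * t * (inner ℝ a v : ℝ) + t ^ 2 * ‖v‖ ^ 2)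
          (2 * (inner ℝ a v : ℝ) + 2 * 0 * ‖v‖ ^ 2) 0 := by
        have ha : HasDerivAt (fun _ : ℝ => ‖a‖ ^ 2) 0 0 := hasDerivAt_const _ _
        have hb : HasDerivAt (fun t : ℝ => 2 * t * (inner ℝ a v : ℝ)) (2 * (inner ℝ a v : ℝ)) 0 := by
          have := ((hasDerivAt_id (0:ℝ)).const_mul 2).mul_const (inner ℝ a v : ℝ)
          simpa using this
        have hc2 : HasDerivAt (fun t : ℝ => t ^ 2 * ‖v‖ ^ 2) (2 * 0 * ‖v‖ ^ 2) 0 := by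
          have := (hasDerivAt_pow 2 (0:ℝ)).mul_const (‖v‖ ^ 2)
          simpa using this
        exact ((ha.add hb).add hc2).congr_deriv (by ring)
      have := this.const_mul (μ / 2)
      exact this.congr_deriv (by ring)
    have := h1.sub h2
    exact this.congr_deriv (by simp)
  have hslope := hφc.le_slope_of_hasDerivAt (Set.mem_univ (0:ℝ)) (Set.mem_univ (1:ℝ))
    zero_lt_one hd
  rw [slope_def_field] at hslope
  have hφ0 : φ 0 = f a - μ / 2 * ‖a‖ ^ 2 := by simp [hφ]
  have hφ1 : φ 1 = f (a + v) - μ / 2 * ‖a + v‖ ^ 2 := by simp [hφ]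
  have hn1 : ‖a + v‖ ^ 2 = ‖a‖ ^ 2 + 2 * (inner ℝ a v : ℝ) + ‖v‖ ^ 2 := by
    have := hnorm 1
    simpa using this
  rw [hφ0, hφ1, hn1] at hslope
  have h2 : ((inner ℝ (g a) v : ℝ) - μ * (inner ℝ a v : ℝ)) ≤
      (f (a + v) - μ / 2 * (‖a‖ ^ 2 + 2 * (inner ℝ a v : ℝ) + ‖v‖ ^ 2) -
        (f a - μ / 2 * ‖a‖ ^ 2)) / (1 - 0) := hslope
  rw [sub_zero, div_one] at h2
  linarith

end Aux

theorem grad_inner_lower_bound {d : ℕ} (μ L : ℝ) (hμ : 0 < μ) (hL : 0 < L)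
    (f : EuclideanSpace ℝ (Fin d) → ℝ) (g : EuclideanSpace ℝ (Fin d) → EuclideanSpace ℝ (Fin d))
    (hg : ∀ x, HasGradientAt f (g x) x)
    (hsc : StrongConvexOn Set.univ μ f)
    (hLip : LipschitzWith (Real.toNNReal L) g)
    (x xb xs : EuclideanSpace ℝ (Fin d)) :
    f xb - f xs - (L + μ) / 2 * ‖xb - x‖ ^ 2 + μ / 4 * ‖xb - xs‖ ^ 2 ≤
      (inner ℝ (g x) (xb - xs) : ℝ) := by
  have h1 := descent_lemma L hL f g hg hLip x (xb - x)
  rw [add_sub_cancel] at h1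
  have h2 := strong_convex_lower μ f g hg hsc x (xs - x)
  rw [add_sub_cancel] at h2
  have hsplit : xb - xs = (xb - x) - (xs - x) := by abel
  have hinner : (inner ℝ (g x) (xb - xs) : ℝ)
      = (inner ℝ (g x) (xb - x) : ℝ) - (inner ℝ (g x) (xs - x) : ℝ) := by
    rw [hsplit, inner_sub_right]
  have htri : ‖xb - xs‖ ≤ ‖xb - x‖ + ‖xs - x‖ := by
    calc ‖xb - xs‖ = ‖(xb - x) - (xs - x)‖ := by rw [← hsplit]
    _ ≤ ‖xb - x‖ + ‖xs - x‖ := norm_sub_le _ _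
  have hsq : ‖xb - xs‖ ^ 2 ≤ 2 * ‖xb - x‖ ^ 2 + 2 * ‖xs - x‖ ^ 2 := by
    have h := mul_self_le_mul_self (norm_nonneg (xb - xs)) htri
    nlinarith [sq_nonneg (‖xb - x‖ - ‖xs - x‖), h]
  have hscale : μ / 4 * ‖xb - xs‖ ^ 2 ≤ μ / 4 * (2 * ‖xb - x‖ ^ 2 + 2 * ‖xs - x‖ ^ 2) :=
    mul_le_mul_of_nonneg_left hsq (by positivity)
  rw [hinner]
  nlinarith [h1, h2, hscale]
end
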